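/- Let G be an r-uniform hypergraph covering pairs (every pair of vertices is contained in some edge), and suppose every blowup of G is F-free for some r-graph F. Then λ(G) ≤ π(F)/r!, where λ(G) is the Lagrangian of G and π(F) is the Turán density of F. More precisely, λ(G) = sup over blowups B of G of |B|/v(B)^r, and this supremum is at most π(F)/r!. -/

import Mathlib

open Finset Filter

def IsProb {V : Type*} [Fintype V] (μ : V → ℝ) : Prop :=
  (∀ v, 0 ≤ μ v) ∧ ∑ v, μ v = 1

def hDen {V : Type*} (F : Finset (Finset V)) (μ : V → ℝ) : ℝ :=
  ∑ E ∈ F, ∏ v ∈ E, μ v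

noncomputable def lagrangian {V : Type*} [Fintype V] (F : Finset (Finset V)) : ℝ :=
  sSup {x : ℝ | ∃ μ : V → ℝ, IsProb μ ∧ x = hDen F μ}

/-- `G` covers pairs: every pair of distinct vertices lies in an edge. -/
def CoversPairs {V : Type*} [Fintype V] (G : Finset (Finset V)) : Prop :=
  ∀ u v : V, u ≠ v → ∃ E ∈ G, u ∈ E ∧ v ∈ E

/-- The blowup of `G` along a map `f : W → V`: the edges are the sets on which `f` is
injective and whose image is an edge of `G`. -/
def blowupAlong {V W : Type*} [Fintype W] [DecidableEq V] [DecidableEq W]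
    (G : Finset (Finset V)) (f : W → V) : Finset (Finset W) :=
  (Finset.univ : Finset W).powerset.filter
    (fun E => (E.image f).card = E.card ∧ E.image f ∈ G)

/-- `Gn` contains a copy of `F`. -/
def ContainsHCopy {U W : Type*} [DecidableEq W] (F : Finset (Finset U))
    (Gn : Finset (Finset W)) : Prop :=
  ∃ f : U ↪ W, ∀ E ∈ F, E.image f ∈ Gn

/-- The Turán number `ex(n, F)` for `r`-uniform hypergraphs on `n` vertices. -/
noncomputable def exNum {U : Type*} (r : ℕ) (F : Finset (Finset U)) (n : ℕ) : ℕ :=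
  sSup {m : ℕ | ∃ Gn : Finset (Finset (Fin n)), (∀ E ∈ Gn, E.card = r) ∧
    ¬ ContainsHCopy F Gn ∧ m = Gn.card}

/-! Blowing up `G` along `f : Fin n → V` produces `∑_{A ∈ G} ∏_{v ∈ A} |f⁻¹(v)|` edges, so the
density `|B| / n^r` of the blowup is `hDen G` evaluated at the fiber distribution of `f`. Every
probability vector is a limit of fiber distributions of maps `Fin n → V` with `n → ∞`, and `hDen G`
is continuous; hence `λ(G)` is the supremum of blowup densities. Blowups are `F`-free, so their
edge counts are at most `ex(n, F) ~ π(F) n^r / r!`. -/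

open scoped Topology

section Blowup

variable {V W : Type*} [DecidableEq V] [Fintype W] [DecidableEq W]

def fiberCard (f : W → V) (v : V) : ℕ := #{i | f i = v}

omit [DecidableEq W] in
lemma sum_fiberCard [Fintype V] (f : W → V) : ∑ v, fiberCard f v = Fintype.card W :=
  (card_eq_sum_card_fiberwise fun i _ => mem_univ (f i)).symm

/-- The transversals of the fibers of `f` over `A` correspond to the sections of `f` over `A`. -/
lemma card_transversals (f : W → V) (A : Finset V) :
    #{E : Finset W | E.image f = A ∧ E.card = A.card} = ∏ v ∈ A, fiberCard f v := by
  unfold fiberCard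
  rw [← prod_coe_sort, ← Fintype.card_piFinset fun a : A => ({i | f i = a} : Finset W)]
  symm
  refine card_bij (fun g _ => univ.image g) (fun g hg => ?_) (fun g hg g' hg' hgg' => ?_) ?_
  · simp only [Fintype.mem_piFinset, mem_filter, mem_univ, true_and] at hg
    have hinj : Function.Injective g := fun a b hab => Subtype.ext (by rw [← hg a, ← hg b, hab])
    simp only [mem_filter, mem_univ, true_and, image_image]
    refine ⟨?_, by rw [card_image_of_injective _ hinj, card_univ, Fintype.card_coe]⟩
    rw [show f ∘ g = Subtype.val from funext hg, univ_eq_attach, attach_image_val]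
  · simp only [Fintype.mem_piFinset, mem_filter, mem_univ, true_and] at hg hg'
    funext a
    obtain ⟨b, -, hb⟩ := mem_image.mp (hgg' ▸ mem_image_of_mem g (mem_univ a))
    obtain rfl : b = a := Subtype.ext (by rw [← hg a, ← hb, hg' b])
    exact hb.symm
  · intro E hE
    simp only [mem_filter, mem_univ, true_and] at hE
    obtain ⟨himage, hcard⟩ := hE
    have hsec : ∀ a : A, ∃ i ∈ E, f i = a := fun a => mem_image.mp (himage ▸ a.2)
    choose s hsE hfs using hsec
    have hinj : Function.Injective s := fun a b hab => Subtype.ext (by rw [← hfs a, ← hfs b, hab])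
    refine ⟨s, by simpa [Fintype.mem_piFinset] using hfs, ?_⟩
    refine eq_of_subset_of_card_le (fun i hi => ?_) ?_
    · obtain ⟨a, -, rfl⟩ := mem_image.mp hi
      exact hsE a
    · rw [card_image_of_injective _ hinj, card_univ, Fintype.card_coe, hcard]

lemma card_blowupAlong (G : Finset (Finset V)) (f : W → V) :
    #(blowupAlong G f) = ∑ A ∈ G, ∏ v ∈ A, fiberCard f v := by
  rw [card_eq_sum_card_fiberwise fun E hE => (mem_filter.mp hE).2.2]
  refine sum_congr rfl fun A hA => ?_
  rw [← card_transversals]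
  congr 1
  ext E
  simp only [blowupAlong, mem_filter, mem_powerset, subset_univ, mem_univ, true_and]
  constructor
  · rintro ⟨⟨hcard, -⟩, rfl⟩
    exact ⟨rfl, hcard.symm⟩
  · rintro ⟨rfl, hcard⟩
    exact ⟨⟨hcard.symm, hA⟩, rfl⟩

lemma card_of_mem_blowupAlong {r : ℕ} {G : Finset (Finset V)} (hG : ∀ A ∈ G, A.card = r)
    (f : W → V) : ∀ E ∈ blowupAlong G f, E.card = r := fun E hE => by
  obtain ⟨-, hinj, himage⟩ := mem_filter.mp hE
  rw [← hinj, hG _ himage]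

lemma card_blowupAlong_div_pow {r : ℕ} {G : Finset (Finset V)} (hG : ∀ A ∈ G, A.card = r)
    (f : W → V) :
    (#(blowupAlong G f) : ℝ) / (Fintype.card W : ℝ) ^ r
      = hDen G (fun v => (fiberCard f v : ℝ) / Fintype.card W) := by
  rw [card_blowupAlong, hDen, Nat.cast_sum, sum_div]
  refine sum_congr rfl fun A hA => ?_
  rw [prod_div_distrib, prod_const, hG A hA, Nat.cast_prod]

end Blowup

section Approximation

variable {V : Type*} [Fintype V] [DecidableEq V]

lemma exists_fiberCard_eq {n : ℕ} (N : V → ℕ) (hN : ∑ v, N v = n) :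
    ∃ f : Fin n → V, ∀ v, fiberCard f v = N v := by
  let e : (Σ v, Fin (N v)) ≃ Fin n := Fintype.equivFinOfCardEq (by simp [hN])
  refine ⟨fun i => (e.symm i).1, fun v => ?_⟩
  rw [fiberCard, ← Fintype.card_subtype, ← Fintype.card_fin (N v)]
  exact Fintype.card_congr ((e.symm.subtypeEquiv fun _ => Iff.rfl).trans (Equiv.sigmaSubtype v))

/-- Round `n μ` down and give the `n - ∑ ⌊n μ w⌋` leftover vertices to one vertex `v₀`; the
leftover is `o(n)` since `∑ ⌊n μ w⌋ / n → ∑ μ w = 1`. -/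
lemma IsProb.exists_nat_approx {μ : V → ℝ} (hμ : IsProb μ) :
    ∃ N : ℕ → V → ℕ, (∀ n, ∑ v, N n v = n) ∧
      ∀ v, Tendsto (fun n : ℕ => (N n v : ℝ) / n) atTop (𝓝 (μ v)) := by
  obtain ⟨v₀⟩ : Nonempty V := by
    by_contra hV
    simpa [not_nonempty_iff.mp hV] using hμ.2
  set T : ℕ → ℕ := fun n => ∑ w, ⌊μ w * n⌋₊ with hT
  have hT_le (n : ℕ) : T n ≤ n := by
    have : (T n : ℝ) ≤ n := by
      calc (T n : ℝ) = ∑ w, (⌊μ w * n⌋₊ : ℝ) := Nat.cast_sum _ _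
        _ ≤ ∑ w, μ w * n := sum_le_sum fun w _ => Nat.floor_le (mul_nonneg (hμ.1 w) n.cast_nonneg)
        _ = n := by rw [← sum_mul, hμ.2, one_mul]
    exact_mod_cast this
  have hfloor (w : V) : Tendsto (fun n : ℕ => (⌊μ w * n⌋₊ : ℝ) / n) atTop (𝓝 (μ w)) :=
    (tendsto_nat_floor_mul_div_atTop (hμ.1 w)).comp tendsto_natCast_atTop_atTop
  have hleftover : Tendsto (fun n : ℕ => ((n - T n : ℕ) : ℝ) / n) atTop (𝓝 0) := by
    have hlim : Tendsto (fun n : ℕ => 1 - ∑ w, (⌊μ w * n⌋₊ : ℝ) / n) atTop (𝓝 (1 - ∑ w, μ w)) :=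
      tendsto_const_nhds.sub (tendsto_finsetSum _ fun w _ => hfloor w)
    rw [hμ.2, sub_self] at hlim
    refine hlim.congr' ?_
    filter_upwards [eventually_gt_atTop 0] with n hn
    rw [Nat.cast_sub (hT_le n), sub_div, div_self (by positivity), hT, Nat.cast_sum, sum_div]
  refine ⟨fun n v => ⌊μ v * n⌋₊ + if v = v₀ then n - T n else 0, fun n => ?_, fun v => ?_⟩
  · rw [sum_add_distrib, sum_ite_eq', if_pos (mem_univ _)]
    exact Nat.add_sub_cancel' (hT_le n)
  · have := (hfloor v).add (show Tendsto (fun n : ℕ => ((if v = v₀ then n - T n else 0 : ℕ) : ℝ) / n)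
      atTop (𝓝 0) by split_ifs <;> simp [hleftover])
    simpa only [add_zero, Nat.cast_add, add_div] using this

lemma IsProb.exists_tendsto_fiberCard_div {μ : V → ℝ} (hμ : IsProb μ) :
    ∃ f : ∀ n : ℕ, Fin n → V,
      ∀ v, Tendsto (fun n : ℕ => (fiberCard (f n) v : ℝ) / n) atTop (𝓝 (μ v)) := by
  obtain ⟨N, hNsum, hNlim⟩ := hμ.exists_nat_approx
  choose f hf using fun n => exists_fiberCard_eq (N n) (hNsum n)
  exact ⟨f, fun v => by simpa only [hf] using hNlim v⟩

end Approximation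

section Lagrangian

variable {V : Type*} [Fintype V]

lemma IsProb.le_one {μ : V → ℝ} (hμ : IsProb μ) (v : V) : μ v ≤ 1 :=
  hμ.2 ▸ single_le_sum (fun w _ => hμ.1 w) (mem_univ v)

lemma isProb_fiberCard_div {W : Type*} [Fintype W] [Nonempty W] [DecidableEq V] (f : W → V) :
    IsProb fun v => (fiberCard f v : ℝ) / Fintype.card W := by
  refine ⟨fun v => by positivity, ?_⟩
  rw [← sum_div, ← Nat.cast_sum, sum_fiberCard, div_self (Nat.cast_ne_zero.2 Fintype.card_ne_zero)]

lemma IsProb.hDen_nonneg (G : Finset (Finset V)) {μ : V → ℝ} (hμ : IsProb μ) : 0 ≤ hDen G μ :=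
  sum_nonneg fun _ _ => prod_nonneg fun v _ => hμ.1 v

lemma IsProb.hDen_le_card (G : Finset (Finset V)) {μ : V → ℝ} (hμ : IsProb μ) :
    hDen G μ ≤ #G := by
  calc hDen G μ ≤ ∑ _E ∈ G, (1 : ℝ) :=
        sum_le_sum fun E _ => prod_le_one (fun v _ => hμ.1 v) fun v _ => hμ.le_one v
    _ = #G := by rw [sum_const, nsmul_one]

lemma bddAbove_hDen_isProb (G : Finset (Finset V)) :
    BddAbove {x : ℝ | ∃ μ : V → ℝ, IsProb μ ∧ x = hDen G μ} :=
  ⟨#G, by rintro _ ⟨μ, hμ, rfl⟩; exact hμ.hDen_le_card G⟩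

omit [Fintype V] in
lemma continuous_hDen (G : Finset (Finset V)) : Continuous (hDen G) :=
  continuous_finsetSum _ fun E _ => continuous_finsetProd E fun v _ => continuous_apply v

variable [DecidableEq V] {r : ℕ} {G : Finset (Finset V)}

lemma IsProb.exists_tendsto_card_blowupAlong_div_pow (hG : ∀ A ∈ G, A.card = r) {μ : V → ℝ}
    (hμ : IsProb μ) : ∃ f : ∀ n : ℕ, Fin n → V,
      Tendsto (fun n : ℕ => (#(blowupAlong G (f n)) : ℝ) / n ^ r) atTop (𝓝 (hDen G μ)) := by
  obtain ⟨f, hf⟩ := hμ.exists_tendsto_fiberCard_div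
  have hdensity (n : ℕ) : (#(blowupAlong G (f n)) : ℝ) / n ^ r
      = hDen G fun v => (fiberCard (f n) v : ℝ) / n := by
    simpa only [Fintype.card_fin] using card_blowupAlong_div_pow hG (f n)
  exact ⟨f, (((continuous_hDen G).tendsto μ).comp (tendsto_pi_nhds.2 hf)).congr
    fun n => (hdensity n).symm⟩

theorem lagrangian_eq_sSup_card_blowupAlong_div_pow (hG : ∀ A ∈ G, A.card = r) :
    lagrangian G = sSup {x : ℝ | ∃ n : ℕ, 0 < n ∧ ∃ f : Fin n → V,
      x = ((blowupAlong G f).card : ℝ) / (n : ℝ) ^ r} := by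
  set S := {x : ℝ | ∃ n : ℕ, 0 < n ∧ ∃ f : Fin n → V,
    x = ((blowupAlong G f).card : ℝ) / (n : ℝ) ^ r}
  have hSL : S ⊆ {x : ℝ | ∃ μ : V → ℝ, IsProb μ ∧ x = hDen G μ} := by
    rintro _ ⟨n, hn, f, rfl⟩
    have : NeZero n := ⟨hn.ne'⟩
    exact ⟨_, by simpa using isProb_fiberCard_div f,
      by simpa using card_blowupAlong_div_pow hG f⟩
  have hS_nonneg : ∀ x ∈ S, 0 ≤ x := by
    rintro _ ⟨n, -, f, rfl⟩
    positivity
  refine le_antisymm (Real.sSup_le ?_ (Real.sSup_nonneg hS_nonneg))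
    (Real.sSup_le (fun x hx => le_csSup (bddAbove_hDen_isProb G) (hSL hx))
      (Real.sSup_nonneg fun _ ⟨μ, hμ, hx⟩ => hx ▸ hμ.hDen_nonneg G))
  rintro _ ⟨μ, hμ, rfl⟩
  obtain ⟨f, hf⟩ := hμ.exists_tendsto_card_blowupAlong_div_pow hG
  refine le_of_tendsto hf ?_
  filter_upwards [eventually_gt_atTop 0] with n hn
  exact le_csSup ((bddAbove_hDen_isProb G).mono hSL) ⟨n, hn, f n, rfl⟩

end Lagrangian

section Turan

variable {U : Type*} {r : ℕ} {F : Finset (Finset U)}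

lemma card_le_exNum {m : ℕ} {Gn : Finset (Finset (Fin m))} (hGn : ∀ E ∈ Gn, E.card = r)
    (hfree : ¬ ContainsHCopy F Gn) : #Gn ≤ exNum r F m :=
  le_csSup ⟨Fintype.card (Finset (Fin m)), by rintro _ ⟨Gn', -, -, rfl⟩; exact card_le_univ Gn'⟩
    ⟨Gn, hGn, hfree, rfl⟩

lemma tendsto_choose_div_pow (r : ℕ) :
    Tendsto (fun n : ℕ => (n.choose r : ℝ) / n ^ r) atTop (𝓝 (r.factorial : ℝ)⁻¹) := by
  refine ((isEquivalent_choose r).div Asymptotics.IsEquivalent.refl).symm.tendsto_nhds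
    (tendsto_const_nhds.congr' ?_)
  filter_upwards [eventually_ne_atTop 0] with n hn
  rw [Pi.div_apply]
  field_simp

lemma tendsto_exNum_div_pow {piF : ℝ}
    (hpi : Tendsto (fun n : ℕ => (exNum r F n : ℝ) / (n.choose r : ℝ)) atTop (𝓝 piF)) :
    Tendsto (fun n : ℕ => (exNum r F n : ℝ) / n ^ r) atTop (𝓝 (piF / r.factorial)) := by
  refine (hpi.mul (tendsto_choose_div_pow r)).congr' ?_
  filter_upwards [eventually_ge_atTop r] with n hn
  rw [div_mul_div_cancel₀ (Nat.cast_ne_zero.2 (Nat.choose_pos hn).ne')]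

variable {V : Type*} [Fintype V] [DecidableEq V] {G : Finset (Finset V)}

lemma IsProb.hDen_le_div_factorial (hG : ∀ A ∈ G, A.card = r)
    (hfree : ∀ (n : ℕ) (f : Fin n → V), ¬ ContainsHCopy F (blowupAlong G f)) {piF : ℝ}
    (hpi : Tendsto (fun n : ℕ => (exNum r F n : ℝ) / (n.choose r : ℝ)) atTop (𝓝 piF))
    {μ : V → ℝ} (hμ : IsProb μ) : hDen G μ ≤ piF / r.factorial := by
  obtain ⟨f, hf⟩ := hμ.exists_tendsto_card_blowupAlong_div_pow hG
  refine le_of_tendsto_of_tendsto' hf (tendsto_exNum_div_pow hpi) fun n => ?_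
  gcongr
  exact_mod_cast card_le_exNum (card_of_mem_blowupAlong hG (f n)) (hfree n (f n))

end Turan

theorem lagrangian_le_turan_density_general {V U : Type*} [Fintype V] [DecidableEq V]
    (r : ℕ)
    (G : Finset (Finset V)) (hGcard : ∀ E ∈ G, E.card = r)
    (F : Finset (Finset U))
    (hfree : ∀ (n : ℕ) (f : Fin n → V), ¬ ContainsHCopy F (blowupAlong G f))
    (piF : ℝ)
    (hpi : Tendsto (fun n : ℕ => (exNum r F n : ℝ) / (n.choose r : ℝ)) atTop (nhds piF)) :
    lagrangian G = sSup {x : ℝ | ∃ n : ℕ, 0 < n ∧ ∃ f : Fin n → V,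
        x = ((blowupAlong G f).card : ℝ) / (n : ℝ) ^ r} ∧
    lagrangian G ≤ piF / (r.factorial : ℝ) := by
  have hpi_nonneg : 0 ≤ piF := ge_of_tendsto' hpi fun n => by positivity
  refine ⟨lagrangian_eq_sSup_card_blowupAlong_div_pow hGcard, Real.sSup_le ?_ (by positivity)⟩
  rintro _ ⟨μ, hμ, rfl⟩
  exact hμ.hDen_le_div_factorial hGcard hfree hpi

/-- If `G` covers pairs and every blowup of `G` is `F`-free, then
`λ(G) = sup_B |B|/v(B)^r ≤ π(F)/r!`, where `π(F)` is the Turán density of `F`. -/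
theorem lagrangian_le_turan_density {V U : Type*} [Fintype V] [DecidableEq V]
    [Fintype U] [DecidableEq U] (r : ℕ) (hr : 2 ≤ r)
    (G : Finset (Finset V)) (hGcard : ∀ E ∈ G, E.card = r) (hGcov : CoversPairs G)
    (F : Finset (Finset U)) (hFcard : ∀ E ∈ F, E.card = r)
    (hfree : ∀ (n : ℕ) (f : Fin n → V), ¬ ContainsHCopy F (blowupAlong G f))
    (piF : ℝ)
    (hpi : Tendsto (fun n : ℕ => (exNum r F n : ℝ) / (n.choose r : ℝ)) atTop (nhds piF)) :
    lagrangian G = sSup {x : ℝ | ∃ n : ℕ, 0 < n ∧ ∃ f : Fin n → V,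
        x = ((blowupAlong G f).card : ℝ) / (n : ℝ) ^ r} ∧
    lagrangian G ≤ piF / (r.factorial : ℝ) :=
  lagrangian_le_turan_density_general r G hGcard F hfree piF hpi
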